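/- arXiv:2301.06042 — 5 statements merged into one kernel-verified Lean document; each statement's English description precedes it below -/
import Mathlib

section
/- Let λ > 1 and define θ'(s) = cos θ(s) + λ. Then the function θ(s) implicitly defined by the curve α(s) = (−λs + 2 arctan(√((λ+1)/(λ−1)) tan((s/2)√(λ²−1))), log(λ − cos(s√(λ²−1)))) satisfies that α is parametrized by arc length, i.e., α₁'(s)² + α₃'(s)² = 1 for all s where the parametrization is defined. -/
open Real

/-!
Put `k = √(λ² - 1)` and `u = s k`. Since `√((λ+1)/(λ-1)) · k = λ + 1`, differentiating the arctangent
gives `α₁' = -λ + k² / (λ - cos u) = (λ cos u - 1) / (λ - cos u)`, while `α₃' = k sin u / (λ - cos u)`.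
The speed is then `1` because `(λ cos u - 1)² + (λ² - 1) sin² u = (λ - cos u)²`.
-/

theorem hasDerivAt_two_mul_arctan_mul_tan (c k x : ℝ) (hx : cos (x / 2 * k) ≠ 0) :
    HasDerivAt (fun y => 2 * arctan (c * tan (y / 2 * k)))
      (c * k / (cos (x / 2 * k) ^ 2 + c ^ 2 * sin (x / 2 * k) ^ 2)) x := by
  have hlin : HasDerivAt (fun y : ℝ => y / 2 * k) (1 / 2 * k) x := by
    simpa using ((hasDerivAt_id x).div_const 2).mul_const k
  refine ((((hasDerivAt_tan hx).comp x hlin).const_mul c).arctan.const_mul 2).congr_deriv ?_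
  rw [Function.comp_apply, tan_eq_sin_div_cos]
  generalize x / 2 * k = y at hx ⊢
  have hpos : cos y ^ 2 + c ^ 2 * sin y ^ 2 ≠ 0 := by positivity
  field_simp

theorem sub_one_mul_cos_sq_add_add_one_mul_sin_sq (lam y : ℝ) :
    (lam - 1) * cos y ^ 2 + (lam + 1) * sin y ^ 2 = lam - cos (2 * y) := by
  rw [cos_two_mul]
  linear_combination (lam + 1) * sin_sq_add_cos_sq y

theorem sub_cos_pos {lam : ℝ} (hlam : 1 < lam) (u : ℝ) : 0 < lam - cos u := by
  linarith [cos_le_one u]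

theorem sqrt_div_mul_sqrt_sq_sub_one {lam : ℝ} (hlam : 1 < lam) :
    √((lam + 1) / (lam - 1)) * √(lam ^ 2 - 1) = lam + 1 := by
  have hpos : 0 < lam - 1 := by linarith
  rw [← sqrt_mul (by positivity),
    show (lam + 1) / (lam - 1) * (lam ^ 2 - 1) = (lam + 1) ^ 2 by field_simp; ring]
  exact sqrt_sq (by linarith)

theorem hasDerivAt_neg_mul_add_two_mul_arctan_sqrt_mul_tan {lam : ℝ} (hlam : 1 < lam) (s : ℝ)
    (hs : cos (s / 2 * √(lam ^ 2 - 1)) ≠ 0) :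
    HasDerivAt (fun x => -lam * x + 2 * arctan (√((lam + 1) / (lam - 1)) *
        tan (x / 2 * √(lam ^ 2 - 1))))
      ((lam * cos (s * √(lam ^ 2 - 1)) - 1) / (lam - cos (s * √(lam ^ 2 - 1)))) s := by
  set k := √(lam ^ 2 - 1)
  set c := √((lam + 1) / (lam - 1))
  have hsub : 0 < lam - 1 := by linarith
  have hc2 : c ^ 2 = (lam + 1) / (lam - 1) := sq_sqrt (by positivity)
  have hden : cos (s / 2 * k) ^ 2 + c ^ 2 * sin (s / 2 * k) ^ 2
      = (lam - cos (s * k)) / (lam - 1) := by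
    rw [hc2, show s * k = 2 * (s / 2 * k) by ring,
      ← sub_one_mul_cos_sq_add_add_one_mul_sin_sq]
    field_simp
  refine (((hasDerivAt_id s).const_mul (-lam)).add
    (hasDerivAt_two_mul_arctan_mul_tan c k s hs)).congr_deriv ?_
  rw [hden, sqrt_div_mul_sqrt_sq_sub_one hlam]
  have hne : lam - cos (s * k) ≠ 0 := (sub_cos_pos hlam (s * k)).ne'
  field_simp
  ring

theorem hasDerivAt_log_sub_cos_mul {lam : ℝ} (hlam : 1 < lam) (k s : ℝ) :
    HasDerivAt (fun x => log (lam - cos (x * k))) (k * sin (s * k) / (lam - cos (s * k))) s := by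
  have hcos : HasDerivAt (fun x => cos (x * k)) (-sin (s * k) * k) s := by
    exact (hasDerivAt_cos (s * k)).comp s (hasDerivAt_mul_const k)
  refine ((hcos.const_sub lam).log (sub_cos_pos hlam (s * k)).ne').congr_deriv ?_
  ring

theorem div_sq_add_div_sq_eq_one {lam k : ℝ} (hk : k ^ 2 = lam ^ 2 - 1) {u : ℝ}
    (hu : lam - cos u ≠ 0) :
    ((lam * cos u - 1) / (lam - cos u)) ^ 2 + (k * sin u / (lam - cos u)) ^ 2 = 1 := by
  rw [div_pow, div_pow, ← add_div, div_eq_one_iff_eq (pow_ne_zero 2 hu)]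
  linear_combination sin u ^ 2 * hk + (lam ^ 2 - 1) * sin_sq_add_cos_sq u

theorem stmt_0 (lam : ℝ) (hlam : 1 < lam)
    (a1 a3 : ℝ → ℝ)
    (ha1 : ∀ s, a1 s = -lam * s +
      2 * arctan (Real.sqrt ((lam + 1) / (lam - 1)) * Real.tan (s / 2 * Real.sqrt (lam ^ 2 - 1))))
    (ha3 : ∀ s, a3 s = Real.log (lam - Real.cos (s * Real.sqrt (lam ^ 2 - 1))))
    (s : ℝ) (hs : Real.cos (s / 2 * Real.sqrt (lam ^ 2 - 1)) ≠ 0) :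
    (deriv a1 s) ^ 2 + (deriv a3 s) ^ 2 = 1 := by
  obtain rfl : a1 = _ := funext ha1
  obtain rfl : a3 = _ := funext ha3
  rw [(hasDerivAt_neg_mul_add_two_mul_arctan_sqrt_mul_tan hlam s hs).deriv,
    (hasDerivAt_log_sub_cos_mul hlam _ s).deriv]
  exact div_sq_add_div_sq_eq_one (sq_sqrt (by nlinarith)) (sub_cos_pos hlam _).ne'
end

section
/- The curve α(s) = (−s + 2 arctan(s), log(1+s²)) satisfies the translating 1-soliton equation: its signed curvature κ(s) equals α₁'(s) + 1, explicitly, κ(s) = α₁'(s) + 1 = 2/(1+s²) for all s ∈ ℝ. -/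
open Real

theorem stmt_3 (a1 a3 κ : ℝ → ℝ)
    (ha1 : ∀ s, a1 s = -s + 2 * arctan s)
    (ha3 : ∀ s, a3 s = Real.log (1 + s ^ 2))
    (hκ : ∀ s, κ s = deriv a1 s * deriv (deriv a3) s - deriv a3 s * deriv (deriv a1) s)
    (s : ℝ) :
    κ s = deriv a1 s + 1 ∧ κ s = 2 / (1 + s ^ 2) := by
  have e1 : a1 = fun s => -s + 2 * arctan s := funext ha1
  have e3 : a3 = fun s => Real.log (1 + s ^ 2) := funext ha3
  have hne : ∀ x : ℝ, (1 + x ^ 2) ≠ 0 := fun x => by positivity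
  have h1 : ∀ x : ℝ, HasDerivAt a1 ((1 - x ^ 2) / (1 + x ^ 2)) x := by
    intro x
    rw [e1]
    have h := (hasDerivAt_id x).neg.add ((Real.hasDerivAt_arctan x).const_mul 2)
    refine h.congr_deriv ?_
    field_simp
    ring
  have d1 : deriv a1 = fun x => (1 - x ^ 2) / (1 + x ^ 2) :=
    funext fun x => (h1 x).deriv
  have h1' : ∀ x : ℝ, HasDerivAt (deriv a1) ((-4 * x) / (1 + x ^ 2) ^ 2) x := by
    intro x
    rw [d1]
    have hn : HasDerivAt (fun x : ℝ => 1 - x ^ 2) (-(2 * x)) x := by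
      simpa using (hasDerivAt_pow 2 x).const_sub 1
    have hd : HasDerivAt (fun x : ℝ => 1 + x ^ 2) (2 * x) x := by
      simpa using (hasDerivAt_pow 2 x).const_add 1
    have h := hn.div hd (hne x)
    refine h.congr_deriv ?_
    field_simp
    ring
  have h3 : ∀ x : ℝ, HasDerivAt a3 (2 * x / (1 + x ^ 2)) x := by
    intro x
    rw [e3]
    have hd : HasDerivAt (fun x : ℝ => 1 + x ^ 2) (2 * x) x := by
      simpa using (hasDerivAt_pow 2 x).const_add 1
    simpa [mul_comm] using hd.log (hne x)
  have d3 : deriv a3 = fun x => 2 * x / (1 + x ^ 2) :=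
    funext fun x => (h3 x).deriv
  have h3' : ∀ x : ℝ, HasDerivAt (deriv a3) ((2 - 2 * x ^ 2) / (1 + x ^ 2) ^ 2) x := by
    intro x
    rw [d3]
    have hn : HasDerivAt (fun x : ℝ => 2 * x) 2 x := by
      simpa using (hasDerivAt_id x).const_mul 2
    have hd : HasDerivAt (fun x : ℝ => 1 + x ^ 2) (2 * x) x := by
      simpa using (hasDerivAt_pow 2 x).const_add 1
    have h := hn.div hd (hne x)
    refine h.congr_deriv ?_
    field_simp
    ring
  have dd1 : deriv (deriv a1) s = (-4 * s) / (1 + s ^ 2) ^ 2 := (h1' s).deriv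
  have dd3 : deriv (deriv a3) s = (2 - 2 * s ^ 2) / (1 + s ^ 2) ^ 2 := (h3' s).deriv
  have hκs : κ s = 2 / (1 + s ^ 2) := by
    rw [hκ, dd1, dd3, d1, d3]
    field_simp
    ring
  refine ⟨?_, hκs⟩
  rw [hκs, d1]
  field_simp
  ring
end

section
/- Let 0 ≤ λ < 1 and α(s) = (−λs + 2 arctan(√((1+λ)/(1−λ)) tanh((s/2)√(1−λ²))), log(−λ + cosh(s√(1−λ²)))). Then α is parametrized by arc length: α₁'(s)² + α₃'(s)² = 1 for all s ∈ ℝ. -/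
/-! Write `m = √(1 - λ²)`, `X = cosh (s m)` and `Y = sinh (s m)`. Differentiating gives
`α₁' = -λ + m² / (X - λ)` and `α₃' = m Y / (X - λ)`; for `α₁'` this uses
`cosh² y + (1 + λ)/(1 - λ) · sinh² y = (cosh 2y - λ)/(1 - λ)` and `√((1 + λ)/(1 - λ)) · m = 1 + λ`.
Then `(m² - λ(X - λ))² + m² Y² = (X - λ)²` is a polynomial identity modulo `X² - Y² = 1`. -/

open Real

lemma Real.hasDerivAt_tanh (x : ℝ) : HasDerivAt tanh (1 / cosh x ^ 2) x := by
  have h := (hasDerivAt_sinh x).div (hasDerivAt_cosh x) (cosh_pos x).ne'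
  rw [show tanh = sinh / cosh from funext tanh_eq_sinh_div_cosh]
  refine h.congr_deriv ?_
  field_simp
  linear_combination cosh_sq_sub_sinh_sq x

lemma hasDerivAt_arctan_mul_tanh {u : ℝ → ℝ} {u' s : ℝ} (c : ℝ) (hu : HasDerivAt u u' s) :
    HasDerivAt (fun t => arctan (c * tanh (u t)))
      (c * u' / (cosh (u s) ^ 2 + c ^ 2 * sinh (u s) ^ 2)) s := by
  refine (((hasDerivAt_tanh (u s)).comp s hu).const_mul c).arctan.congr_deriv ?_
  rw [Function.comp_apply, tanh_eq_sinh_div_cosh]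
  field_simp

lemma hasDerivAt_log_neg_add_cosh {u : ℝ → ℝ} {u' s lam : ℝ} (hlam : lam < 1)
    (hu : HasDerivAt u u' s) :
    HasDerivAt (fun t => log (-lam + cosh (u t))) (sinh (u s) * u' / (cosh (u s) - lam)) s := by
  have hpos : -lam + cosh (u s) ≠ 0 := by linarith [one_le_cosh (u s)]
  convert (hu.cosh.const_add (-lam)).log hpos using 2
  ring

lemma cosh_sq_add_div_mul_sinh_sq {lam : ℝ} (hlam : lam < 1) (y : ℝ) :
    cosh y ^ 2 + (1 + lam) / (1 - lam) * sinh y ^ 2 = (cosh (2 * y) - lam) / (1 - lam) := by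
  have : 1 - lam ≠ 0 := by linarith
  rw [cosh_two_mul]
  field_simp
  linear_combination (-lam) * cosh_sq_sub_sinh_sq y

lemma sqrt_div_mul_sqrt_one_sub_sq {lam : ℝ} (hlam0 : -1 ≤ lam) (hlam1 : lam < 1) :
    √((1 + lam) / (1 - lam)) * √(1 - lam ^ 2) = 1 + lam := by
  have : 1 - lam ≠ 0 := by linarith
  rw [← sqrt_mul (div_nonneg (by linarith) (by linarith)),
    show (1 + lam) / (1 - lam) * (1 - lam ^ 2) = (1 + lam) ^ 2 by field_simp; ring]
  exact sqrt_sq (by linarith)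

lemma hasDerivAt_neg_mul_add_two_mul_arctan {lam : ℝ} (hlam0 : -1 ≤ lam) (hlam1 : lam < 1)
    (s : ℝ) :
    HasDerivAt (fun s => -lam * s +
        2 * arctan (√((1 + lam) / (1 - lam)) * tanh (s / 2 * √(1 - lam ^ 2))))
      (-lam + (1 - lam ^ 2) / (cosh (s * √(1 - lam ^ 2)) - lam)) s := by
  have hc : √((1 + lam) / (1 - lam)) ^ 2 = (1 + lam) / (1 - lam) :=
    sq_sqrt (div_nonneg (by linarith) (by linarith))
  refine (((hasDerivAt_id s).const_mul (-lam)).add ((hasDerivAt_arctan_mul_tanh _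
    (((hasDerivAt_id s).div_const 2).mul_const _)).const_mul 2)).congr_deriv ?_
  rw [id, hc, cosh_sq_add_div_mul_sinh_sq hlam1, show 2 * (s / 2 * √(1 - lam ^ 2)) =
    s * √(1 - lam ^ 2) by ring]
  field_simp
  rw [mul_assoc, sqrt_div_mul_sqrt_one_sub_sq hlam0 hlam1]
  ring

lemma neg_add_div_sq_add_div_sq_eq_one {lam m X Y : ℝ} (hm : m ^ 2 = 1 - lam ^ 2)
    (hXY : X ^ 2 - Y ^ 2 = 1) (hX : X - lam ≠ 0) :
    (-lam + (1 - lam ^ 2) / (X - lam)) ^ 2 + (m * Y / (X - lam)) ^ 2 = 1 := by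
  field_simp
  linear_combination Y ^ 2 * hm - (1 - lam ^ 2) * hXY

theorem stmt_4 (lam : ℝ) (hlam0 : 0 ≤ lam) (hlam1 : lam < 1)
    (a1 a3 : ℝ → ℝ)
    (ha1 : ∀ s, a1 s = -lam * s +
      2 * arctan (Real.sqrt ((1 + lam) / (1 - lam)) * Real.tanh (s / 2 * Real.sqrt (1 - lam ^ 2))))
    (ha3 : ∀ s, a3 s = Real.log (-lam + Real.cosh (s * Real.sqrt (1 - lam ^ 2))))
    (s : ℝ) :
    (deriv a1 s) ^ 2 + (deriv a3 s) ^ 2 = 1 := by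
  set m := √(1 - lam ^ 2)
  have hd1 : deriv a1 s = -lam + (1 - lam ^ 2) / (cosh (s * m) - lam) := by
    rw [funext ha1]
    exact (hasDerivAt_neg_mul_add_two_mul_arctan (by linarith) hlam1 s).deriv
  have hd3 : deriv a3 s = m * sinh (s * m) / (cosh (s * m) - lam) := by
    rw [funext ha3, mul_comm m]
    exact (hasDerivAt_log_neg_add_cosh hlam1 (hasDerivAt_mul_const m)).deriv
  rw [hd1, hd3]
  exact neg_add_div_sq_add_div_sq_eq_one (sq_sqrt (by nlinarith)) (cosh_sq_sub_sinh_sq _)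
    (by linarith [one_le_cosh (s * m)])
end

section
/- Let λ > 1, s₀ = π/√(λ²−1), σ ∈ [0, s₀], α₃(s) = log(λ − cos(s√(λ²−1))), h(s) = (λ²−1)/(λ − cos(s√(λ²−1))), and f(s) = sin(πs/(2s₀) + (π/2)(1 − σ/s₀)) · e^{−α₃(s)/2}. Then ∫_{−s₀+σ}^{s₀+σ} h(s)² f(s)² e^{α₃(s)} ds = π(λ + cos(σ√(λ²−1))). -/
open Real

/-! With `k = √(λ² - 1)` and `s₀ = π / k`, the weight `e^{α₃}` cancels against `f²`, the sine
becomes `cos ((s - σ) k / 2)`, and the substitution `u = s k` turns the integral into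
`k³ / 2 · ∫ (1 + cos (u - σ k)) / (λ - cos u)²` over the full period `[σ k - π, σ k + π]`.
On a full period the periodic parts of a primitive cancel, and only the secular term
`u (λ + cos (σ k)) / k³` survives. -/

section

variable {lam : ℝ}

lemma sub_cos_pos_of_one_lt (hlam : 1 < lam) (u : ℝ) : 0 < lam - cos u := by
  linarith [cos_le_one u]

lemma hasDerivAt_sin_div_sub_cos {u : ℝ} (hu : lam - cos u ≠ 0) :
    HasDerivAt (fun u => sin u / (lam - cos u)) ((lam * cos u - 1) / (lam - cos u) ^ 2) u := by
  refine ((hasDerivAt_sin u).div ((hasDerivAt_cos u).const_sub lam) hu).congr_deriv ?_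
  rw [← sin_sq_add_cos_sq u]
  ring

lemma hasDerivAt_inv_sub_cos {u : ℝ} (hu : lam - cos u ≠ 0) :
    HasDerivAt (fun u => (lam - cos u)⁻¹) (-sin u / (lam - cos u) ^ 2) u := by
  refine (((hasDerivAt_cos u).const_sub lam).inv hu).congr_deriv ?_
  ring

/-- Unlike the textbook primitive through `tan (u / 2)`, this one is continuous on all of `ℝ`. -/
lemma hasDerivAt_add_two_mul_arctan (hlam : 1 < lam) (u : ℝ) :
    HasDerivAt (fun u => u + 2 * arctan (sin u / (lam + √(lam ^ 2 - 1) - cos u)))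
      (√(lam ^ 2 - 1) / (lam - cos u)) u := by
  set k := √(lam ^ 2 - 1)
  have hk : k ^ 2 = lam ^ 2 - 1 := sq_sqrt (by nlinarith)
  have hk0 : 0 ≤ k := sqrt_nonneg _
  have hD := sub_cos_pos_of_one_lt hlam u
  have hP : lam + k - cos u ≠ 0 := by linarith
  refine ((hasDerivAt_id u).add
    ((hasDerivAt_sin_div_sub_cos hP).arctan.const_mul 2)).congr_deriv ?_
  have hs := sin_sq_add_cos_sq u
  field_simp
  linear_combination (lam - cos u - k) * hs + (cos u - lam - k) * hk

lemma integral_one_add_cos_sub_div_sq (hlam : 1 < lam) (c : ℝ) :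
    ∫ u in (c - π)..(c + π), (1 + cos (u - c)) / (lam - cos u) ^ 2 =
      2 * π * (lam + cos c) / √(lam ^ 2 - 1) ^ 3 := by
  set k := √(lam ^ 2 - 1) with hk_def
  have hk : k ^ 2 = lam ^ 2 - 1 := sq_sqrt (by nlinarith)
  have hk0 : 0 < k := sqrt_pos.2 (by nlinarith)
  have hD := sub_cos_pos_of_one_lt hlam
  -- `k² (1 + cos c cos u) / D² = (1 + λ cos c) (λ cos u - 1) / D² + (λ + cos c) / D`, `D = λ - cos u`
  set G : ℝ → ℝ := fun u =>
    ((1 + lam * cos c) * (sin u / (lam - cos u))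
      + (lam + cos c) / k * (u + 2 * arctan (sin u / (lam + k - cos u)))) / k ^ 2
      - sin c * (lam - cos u)⁻¹
  have hG : ∀ u, HasDerivAt G ((1 + cos (u - c)) / (lam - cos u) ^ 2) u := by
    intro u
    have hu := (hD u).ne'
    refine (((((hasDerivAt_sin_div_sub_cos hu).const_mul (1 + lam * cos c)).add
      ((hasDerivAt_add_two_mul_arctan hlam u).const_mul ((lam + cos c) / k))).div_const (k ^ 2)).sub
      ((hasDerivAt_inv_sub_cos hu).const_mul (sin c))).congr_deriv ?_
    rw [cos_sub]
    field_simp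
    rw [← hk_def]
    linear_combination -(1 + cos u * cos c) * k * hk
  have hcont : Continuous fun u => (1 + cos (u - c)) / (lam - cos u) ^ 2 := by
    fun_prop (disch := exact fun u => (pow_pos (hD u) 2).ne')
  rw [intervalIntegral.integral_eq_sub_of_hasDerivAt (fun u _ => hG u)
    (hcont.intervalIntegrable _ _), show c + π = c - π + 2 * π by ring]
  simp only [G, sin_add_two_pi, cos_add_two_pi]
  field_simp
  ring
end

lemma mul_exp_neg_half_sq_mul_exp (x a : ℝ) : (x * exp (-a / 2)) ^ 2 * exp a = x ^ 2 := by
  rw [mul_pow, mul_assoc, ← exp_nat_mul, ← exp_add]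
  ring_nf
  rw [exp_zero, mul_one]

theorem stmt_7_general (lam : ℝ) (hlam : 1 < lam)
    (s₀ σ : ℝ) (hs₀ : s₀ = π / Real.sqrt (lam ^ 2 - 1))
    (a3 h f : ℝ → ℝ)
    (hh : ∀ s, h s = (lam ^ 2 - 1) / (lam - Real.cos (s * Real.sqrt (lam ^ 2 - 1))))
    (hf : ∀ s, f s = Real.sin (π * s / (2 * s₀) + (π / 2) * (1 - σ / s₀)) * Real.exp (-(a3 s) / 2)) :
    ∫ s in (-s₀ + σ)..(s₀ + σ), (h s) ^ 2 * (f s) ^ 2 * Real.exp (a3 s) =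
      π * (lam + Real.cos (σ * Real.sqrt (lam ^ 2 - 1))) := by
  set k := √(lam ^ 2 - 1) with hk_def
  have hk0 : 0 < k := sqrt_pos.2 (by nlinarith)
  have hk : k ^ 2 = lam ^ 2 - 1 := sq_sqrt (by nlinarith)
  have hs₀k : s₀ * k = π := by rw [hs₀]; field_simp
  have hintegrand : ∀ s, h s ^ 2 * f s ^ 2 * exp (a3 s) =
      k ^ 4 / 2 * ((1 + cos (s * k - σ * k)) / (lam - cos (s * k)) ^ 2) := by
    intro s
    have hangle : π * s / (2 * s₀) + π / 2 * (1 - σ / s₀) = (s * k - σ * k) / 2 + π / 2 := by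
      rw [hs₀]; field_simp; ring
    have hf2 : f s ^ 2 * exp (a3 s) = cos ((s * k - σ * k) / 2) ^ 2 := by
      rw [hf, mul_exp_neg_half_sq_mul_exp, hangle, sin_add_pi_div_two]
    rw [mul_assoc, hf2, hh, cos_sq, show 2 * ((s * k - σ * k) / 2) = s * k - σ * k by ring,
      ← hk, div_pow]
    ring
  simp only [hintegrand]
  rw [intervalIntegral.integral_const_mul,
    intervalIntegral.integral_comp_mul_right (fun u => (1 + cos (u - σ * k)) / (lam - cos u) ^ 2)
      hk0.ne',
    show (-s₀ + σ) * k = σ * k - π by linarith, show (s₀ + σ) * k = σ * k + π by linarith,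
    integral_one_add_cos_sub_div_sq hlam, smul_eq_mul, ← hk_def]
  field_simp

theorem stmt_7 (lam : ℝ) (hlam : 1 < lam)
    (s₀ σ : ℝ) (hs₀ : s₀ = π / Real.sqrt (lam ^ 2 - 1))
    (hσ : σ ∈ Set.Icc 0 s₀)
    (a3 h f : ℝ → ℝ)
    (ha3 : ∀ s, a3 s = Real.log (lam - Real.cos (s * Real.sqrt (lam ^ 2 - 1))))
    (hh : ∀ s, h s = (lam ^ 2 - 1) / (lam - Real.cos (s * Real.sqrt (lam ^ 2 - 1))))
    (hf : ∀ s, f s = Real.sin (π * s / (2 * s₀) + (π / 2) * (1 - σ / s₀)) * Real.exp (-(a3 s) / 2)) :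
    ∫ s in (-s₀ + σ)..(s₀ + σ), (h s) ^ 2 * (f s) ^ 2 * Real.exp (a3 s) =
      π * (lam + Real.cos (σ * Real.sqrt (lam ^ 2 - 1))) :=
  stmt_7_general lam hlam s₀ σ hs₀ a3 h f hh hf
end

section
/- Define φ(s₀) = −s₀³/3 − 9s₀ + (9 + 6s₀² − 3s₀⁴) arctan(s₀) for s₀ > 0. Then there exists a unique s̄₀ > 0 with φ(s̄₀) = 0, and φ(s₀) < 0 for all s₀ > s̄₀; moreover 1.02 < s̄₀ < 1.03. -/
/-! On `[1, ∞)` the derivative `4s (3 (1 - s²) arctan s - s)` of φ is negative, so φ is strictly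
decreasing there, and it changes sign between `1.02` and `1.03` by elementary bounds on
`arctan 1.02 = π/4 + arctan (1/101)` and `arctan 1.03 = π/4 + arctan (3/203)`.

On `(0, 1]` the coefficient `9 + 6s² - 3s⁴` of `arctan s` is positive. Dividing φ by it leaves
`arctan s - r(s)` with `r` rational, whose derivative no longer involves `arctan`: it is a positive
factor times `g(s²)`, where `g(t) = t³ - 15t² - 7t + 9` decreases on `[0, 1]`. Hence the quotient
first increases and then decreases on `[0, 1]`; as it vanishes at `0` and is positive at `1`, it is
positive on `(0, 1]`. -/

open Real Set

theorem pos_of_hasDerivAt_mul_strictAntiOn {f w σ : ℝ → ℝ} {a b s : ℝ}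
    (hf : ContinuousOn f (Icc a b)) (hderiv : ∀ x ∈ Ioo a b, HasDerivAt f (w x * σ x) x)
    (hw : ∀ x ∈ Ioo a b, 0 < w x) (hσ : StrictAntiOn σ (Icc a b))
    (ha : 0 ≤ f a) (hb : 0 < f b) (hs : s ∈ Ioc a b) : 0 < f s := by
  obtain ⟨has, hsb⟩ := hs
  rcases le_or_gt 0 (σ s) with hσs | hσs
  · have hmono : StrictMonoOn f (Icc a s) := by
      refine strictMonoOn_of_deriv_pos (convex_Icc a s) (hf.mono (Icc_subset_Icc_right hsb))
        fun x hx => ?_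
      rw [interior_Icc] at hx
      have hxab : x ∈ Ioo a b := ⟨hx.1, hx.2.trans_le hsb⟩
      rw [(hderiv x hxab).deriv]
      exact mul_pos (hw x hxab)
        (hσs.trans_lt (hσ (Ioo_subset_Icc_self hxab) ⟨has.le, hsb⟩ hx.2))
    exact ha.trans_lt (hmono (left_mem_Icc.2 has.le) (right_mem_Icc.2 has.le) has)
  · rcases hsb.eq_or_lt with rfl | hsb
    · exact hb
    have hanti : StrictAntiOn f (Icc s b) := by
      refine strictAntiOn_of_deriv_neg (convex_Icc s b) (hf.mono (Icc_subset_Icc_left has.le))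
        fun x hx => ?_
      rw [interior_Icc] at hx
      have hxab : x ∈ Ioo a b := ⟨has.trans hx.1, hx.2⟩
      rw [(hderiv x hxab).deriv]
      exact mul_neg_of_pos_of_neg (hw x hxab)
        ((hσ ⟨has.le, hsb.le⟩ (Ioo_subset_Icc_self hxab) hx.1).trans hσs)
    exact hb.trans (hanti (left_mem_Icc.2 hsb.le) (right_mem_Icc.2 hsb.le) hsb)

theorem arctan_le_self {x : ℝ} (hx : 0 ≤ x) : arctan x ≤ x := by
  simpa using le_tan (arctan_nonneg.2 hx) (arctan_lt_pi_div_two x)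

theorem div_sqrt_one_add_sq_le_arctan {x : ℝ} (hx : 0 ≤ x) : x / √(1 + x ^ 2) ≤ arctan x := by
  simpa [sin_arctan] using sin_le (arctan_nonneg.2 hx)

theorem arctan_one_add_div_one_sub (y : ℝ) (hy : y < 1) : arctan ((1 + y) / (1 - y)) = π / 4 + arctan y := by
  rw [← arctan_one, arctan_add (by linarith), one_mul]

noncomputable def plateauPhi (s : ℝ) : ℝ :=
  -s ^ 3 / 3 - 9 * s + (9 + 6 * s ^ 2 - 3 * s ^ 4) * arctan s

theorem hasDerivAt_plateauPhi (x : ℝ) :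
    HasDerivAt plateauPhi (4 * x * (3 * (1 - x ^ 2) * arctan x - x)) x := by
  have h := (((hasDerivAt_pow 3 x).fun_neg.div_const 3).fun_sub
    ((hasDerivAt_id x).const_mul 9)).fun_add
    (((((hasDerivAt_pow 2 x).const_mul 6).const_add 9).fun_sub
      ((hasDerivAt_pow 4 x).const_mul 3)).fun_mul (hasDerivAt_arctan x))
  refine h.congr_deriv ?_
  have : (0:ℝ) < 1 + x ^ 2 := by positivity
  field_simp
  ring

theorem continuous_plateauPhi : Continuous plateauPhi :=
  continuous_iff_continuousAt.2 fun x => (hasDerivAt_plateauPhi x).continuousAt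

theorem plateauPhi_strictAntiOn : StrictAntiOn plateauPhi (Ici 1) := by
  refine strictAntiOn_of_deriv_neg (convex_Ici 1) continuous_plateauPhi.continuousOn
    fun x hx => ?_
  rw [interior_Ici] at hx
  have hx : 1 < x := hx
  rw [(hasDerivAt_plateauPhi x).deriv]
  have hatan : 0 < arctan x := arctan_pos.2 (by linarith)
  have : (1 - x ^ 2) * arctan x < 0 := mul_neg_of_neg_of_pos (by nlinarith) hatan
  nlinarith

noncomputable def arctanGap (s : ℝ) : ℝ :=
  arctan s - (s ^ 3 / 3 + 9 * s) / (9 + 6 * s ^ 2 - 3 * s ^ 4)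

theorem strictAntiOn_cubic_comp_sq :
    StrictAntiOn (fun x : ℝ => (x ^ 2) ^ 3 - 15 * (x ^ 2) ^ 2 - 7 * x ^ 2 + 9) (Icc 0 1) := by
  have hcubic : StrictAntiOn (fun t : ℝ => t ^ 3 - 15 * t ^ 2 - 7 * t + 9) (Icc 0 1) := by
    intro t ⟨ht0, ht1⟩ u ⟨hu0, hu1⟩ htu
    have key : 0 < (u - t) * (15 * (t + u) + 7 - (t ^ 2 + t * u + u ^ 2)) :=
      mul_pos (by linarith) (by nlinarith)
    nlinarith
  refine hcubic.comp_strictMonoOn ((pow_left_strictMonoOn₀ two_ne_zero).mono fun x hx => hx.1)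
    fun x ⟨hx0, hx1⟩ => ⟨by positivity, pow_le_one₀ hx0 hx1⟩

theorem nine_add_six_mul_sq_sub_three_mul_pow_four_pos {x : ℝ} (hx : x ^ 2 ≤ 1) :
    0 < 9 + 6 * x ^ 2 - 3 * x ^ 4 := by
  nlinarith [sq_nonneg x]

theorem hasDerivAt_arctanGap {x : ℝ} (hx : 9 + 6 * x ^ 2 - 3 * x ^ 4 ≠ 0) :
    HasDerivAt arctanGap (8 * x ^ 2 / ((1 + x ^ 2) * (9 + 6 * x ^ 2 - 3 * x ^ 4) ^ 2) *
      ((x ^ 2) ^ 3 - 15 * (x ^ 2) ^ 2 - 7 * x ^ 2 + 9)) x := by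
  have h := (hasDerivAt_arctan x).fun_sub
    ((((hasDerivAt_pow 3 x).div_const 3).fun_add ((hasDerivAt_id x).const_mul 9)).fun_div
      ((((hasDerivAt_pow 2 x).const_mul 6).const_add 9).fun_sub
        ((hasDerivAt_pow 4 x).const_mul 3)) hx)
  refine h.congr_deriv ?_
  have hden : (1 + x ^ 2) * (9 + 6 * x ^ 2 - 3 * x ^ 4) ^ 2 ≠ 0 :=
    mul_ne_zero (by positivity) (pow_ne_zero 2 hx)
  simp only [id]
  rw [div_mul_eq_mul_div, div_sub_div _ _ (by positivity) (pow_ne_zero 2 hx),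
    div_eq_div_iff hden hden]
  ring

theorem arctanGap_zero : arctanGap 0 = 0 := by
  simp [arctanGap]

theorem arctanGap_one_pos : 0 < arctanGap 1 := by
  have hpi := pi_gt_d2
  norm_num [arctanGap, arctan_one]
  linarith

theorem plateauPhi_eq_mul_arctanGap {x : ℝ} (hx : 9 + 6 * x ^ 2 - 3 * x ^ 4 ≠ 0) :
    plateauPhi x = (9 + 6 * x ^ 2 - 3 * x ^ 4) * arctanGap x := by
  rw [plateauPhi, arctanGap, mul_sub, mul_div_cancel₀ _ hx]
  ring

theorem plateauPhi_pos {s : ℝ} (hs0 : 0 < s) (hs1 : s ≤ 1) : 0 < plateauPhi s := by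
  have hcoeff {x : ℝ} (hx : x ∈ Icc (0 : ℝ) 1) : 0 < 9 + 6 * x ^ 2 - 3 * x ^ 4 :=
    nine_add_six_mul_sq_sub_three_mul_pow_four_pos (pow_le_one₀ hx.1 hx.2)
  have hgap : 0 < arctanGap s := by
    refine pos_of_hasDerivAt_mul_strictAntiOn (fun x hx => ?_)
      (fun x hx => hasDerivAt_arctanGap (hcoeff (Ioo_subset_Icc_self hx)).ne')
      (fun x hx => ?_) strictAntiOn_cubic_comp_sq arctanGap_zero.ge arctanGap_one_pos ⟨hs0, hs1⟩
    · exact (hasDerivAt_arctanGap (hcoeff hx).ne').continuousAt.continuousWithinAt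
    · have hx0 : 0 < x := hx.1
      have hcoeffx := hcoeff (Ioo_subset_Icc_self hx)
      positivity
  rw [plateauPhi_eq_mul_arctanGap (hcoeff ⟨hs0.le, hs1⟩).ne']
  exact mul_pos (hcoeff ⟨hs0.le, hs1⟩) hgap

theorem plateauPhi_102_pos : 0 < plateauPhi 1.02 := by
  have hsqrt : √(1 + (1 / 101 : ℝ) ^ 2) ≤ 1.01 := by
    rw [sqrt_le_left (by norm_num)]; norm_num
  have hsmall : (1 / 101 : ℝ) / 1.01 ≤ arctan (1 / 101) :=
    (div_le_div_of_nonneg_left (by norm_num) (sqrt_pos.2 (by positivity)) hsqrt).trans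
      (div_sqrt_one_add_sq_le_arctan (by norm_num))
  have hsplit := arctan_one_add_div_one_sub (1 / 101) (by norm_num)
  have hpi := pi_gt_d4
  norm_num [plateauPhi] at hsplit hsmall ⊢
  linarith

theorem plateauPhi_103_neg : plateauPhi 1.03 < 0 := by
  have hsmall := arctan_le_self (x := 3 / 203) (by norm_num)
  have hsplit := arctan_one_add_div_one_sub (3 / 203) (by norm_num)
  have hpi := pi_lt_d4
  norm_num [plateauPhi] at hsplit hsmall ⊢
  linarith

theorem stmt_13 (φ : ℝ → ℝ)
    (hφ : ∀ s, φ s = -s ^ 3 / 3 - 9 * s + (9 + 6 * s ^ 2 - 3 * s ^ 4) * arctan s) :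
    ∃ s₀ : ℝ, 1.02 < s₀ ∧ s₀ < 1.03 ∧ φ s₀ = 0 ∧
      (∀ s : ℝ, 0 < s → φ s = 0 → s = s₀) ∧
      (∀ s : ℝ, s₀ < s → φ s < 0) := by
  obtain rfl : φ = plateauPhi := funext hφ
  obtain ⟨s₀, ⟨hs₀l, hs₀r⟩, hroot⟩ := intermediate_value_Ioo' (by norm_num : (1.02 : ℝ) ≤ 1.03)
    continuous_plateauPhi.continuousOn ⟨plateauPhi_103_neg, plateauPhi_102_pos⟩
  have hs₀ : s₀ ∈ Ici 1 := by simp only [mem_Ici]; linarith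
  refine ⟨s₀, hs₀l, hs₀r, hroot, fun s hs hzero => ?_, fun s hs => ?_⟩
  · have hs1 : s ∈ Ici 1 := le_of_not_gt fun h => (plateauPhi_pos hs h.le).ne' hzero
    exact plateauPhi_strictAntiOn.injOn hs1 hs₀ (hzero.trans hroot.symm)
  · simpa only [hroot] using plateauPhi_strictAntiOn hs₀ (mem_Ici.2 (hs₀.out.trans hs.le)) hs
end
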